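/- arXiv:2208.12543 — 3 statements merged into one kernel-verified Lean document; each statement's English description precedes it below -/
import Mathlib

section
/- Let I be a BinCSP instance with Gaifman graph G, and let W ⊆ V(G) be such that G − W is a forest; fix a rooted orientation T of G − W (a choice of root in each component). Fix α with α(w) ∈ D(w) for every w ∈ W. For v ∈ V(G)∖W and c ∈ D(v), define Boolean values y_{v,c} by recursion from the leaves of T upwards: y_{v,c} is true iff (a) for every w ∈ W with vw ∈ E(G), (c, α(w)) ∈ C(v, w), and (b) for every child v′ of v in T there exists c′ ∈ D(v′) with (c, c′) ∈ C(v, v′) and y_{v′,c′} true. Then y_{v,c} is true if and only if there exists an assignment η on {v} ∪ W ∪ desc(v), where desc(v) is the set of strict descendants of v in T, with η(v) = c, η(w) = α(w) for all w ∈ W, η(u) ∈ D(u) for all u, and (η(x), η(y)) ∈ C(x, y) for every edge xy of G whose endpoints both lie in {v} ∪ W ∪ desc(v) and at least one of which lies in {v} ∪ desc(v). -/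
/-- A rooted forest on a vertex type `V`, given by a parent function.
Well-foundedness guarantees that following parents from any vertex
eventually reaches a root (a vertex with no parent). -/
structure RootedForest (V : Type) where
  parent : V → Option V
  wf : WellFounded (fun a b => parent b = some a)

namespace RootedForest

/-- `F.anc u v` means that `u` is an ancestor of `v` in `F` (possibly `u = v`). -/
def anc {V : Type} (F : RootedForest V) (u v : V) : Prop :=
  Relation.ReflTransGen (fun a b => F.parent a = some b) v u

end RootedForest

open Relation

namespace RootedForest

variable {V : Type} (F : RootedForest V)



lemma trans_irrefl (a : V) : ¬ TransGen (fun a b => F.parent a = some b) a a := by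
  intro ha
  have hw : WellFounded (TransGen (fun a b : V => F.parent b = some a)) := F.wf.transGen
  have ha' : TransGen (fun a b : V => F.parent b = some a) a a := TransGen.swap (r := fun a b : V => F.parent a = some b) a a ha
  exact WellFounded.recursion hw a (C := fun b => TransGen (fun a b : V => F.parent b = some a) b b → False)
    (fun b ih hb => ih b hb hb) ha'

lemma anc_antisymm {u v : V} (h1 : F.anc u v) (h2 : F.anc v u) : u = v := by
  by_contra hne
  rcases (ReflTransGen.cases_head h1) with h | ⟨c, hc, hc2⟩
  · exact hne h.symm
  · exact F.trans_irrefl v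
      (TransGen.head' (r := fun a b => F.parent a = some b) hc (ReflTransGen.trans hc2 h2))

lemma parent_unique {a b b' : V} (h : F.parent a = some b) (h' : F.parent a = some b') : b = b' := by
  rw [h] at h'; exact Option.some_inj.mp h'

/-- ancestors of a common vertex are comparable -/
lemma comparable {x u u' : V} (h : ReflTransGen (fun a b => F.parent a = some b) x u)
    (h' : ReflTransGen (fun a b => F.parent a = some b) x u') :
    ReflTransGen (fun a b => F.parent a = some b) u u' ∨
    ReflTransGen (fun a b => F.parent a = some b) u' u := by
  induction h using ReflTransGen.head_induction_on with
  | refl => exact Or.inl h'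
  | head hab hb ih =>
    rename_i a b
    rcases ReflTransGen.cases_head h' with rfl | ⟨c, hc, hc2⟩
    · exact Or.inr (ReflTransGen.head hab hb)
    · exact ih (F.parent_unique hab hc ▸ hc2)

/-- existence of the child through which a strict descendant hangs -/
lemma child_exists {v x : V} (h : F.anc v x) (hne : x ≠ v) :
    ∃ v', F.parent v' = some v ∧ F.anc v' x := by
  induction h using ReflTransGen.head_induction_on with
  | refl => exact absurd rfl hne
  | head hab hb ih =>
    rename_i a b
    by_cases hbv : b = v
    · exact ⟨a, hbv ▸ hab, ReflTransGen.refl⟩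
    · obtain ⟨v', hv1, hv2⟩ := ih hbv
      exact ⟨v', hv1, ReflTransGen.head hab hv2⟩

lemma child_unique {v x v1 v2 : V} (h1 : F.parent v1 = some v) (h2 : F.parent v2 = some v)
    (a1 : F.anc v1 x) (a2 : F.anc v2 x) : v1 = v2 := by
  rcases F.comparable a1 a2 with h | h
  · rcases ReflTransGen.cases_head h with rfl | ⟨c, hc, hc2⟩
    · rfl
    · exfalso
      have hcv : v = c := F.parent_unique h1 hc
      subst hcv
      exact F.trans_irrefl v (TransGen.tail' (r := fun a b => F.parent a = some b) hc2 h2)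
  · rcases ReflTransGen.cases_head h with rfl | ⟨c, hc, hc2⟩
    · rfl
    · exfalso
      have hcv : v = c := F.parent_unique h2 hc
      subst hcv
      exact F.trans_irrefl v (TransGen.tail' (r := fun a b => F.parent a = some b) hc2 h1)

lemma wf_child [Finite V] : WellFounded (fun a b : V => F.parent a = some b) := by
  have ht : IsTrans V (TransGen (fun a b : V => F.parent a = some b)) := inferInstance
  have hi : IsIrrefl V (TransGen (fun a b : V => F.parent a = some b)) := ⟨F.trans_irrefl⟩
  have hw := Finite.wellFounded_of_trans_of_irrefl (TransGen (fun a b : V => F.parent a = some b))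
  exact Subrelation.wf (q := fun a b : V => F.parent a = some b) (r := TransGen (fun a b : V => F.parent a = some b)) (fun {x y} (h : F.parent x = some y) => TransGen.single (r := fun a b : V => F.parent a = some b) h) hw

lemma anc_trans {u v w : V} (h1 : F.anc u v) (h2 : F.anc v w) : F.anc u w :=
  ReflTransGen.trans h2 h1

lemma anc_refl (u : V) : F.anc u u := ReflTransGen.refl

lemma anc_parent {u v : V} (h : F.parent v = some u) : F.anc u v := ReflTransGen.single h

lemma not_parent_of_anc {u v : V} (h : F.anc u v) (h2 : F.parent u = some v) : False :=
  F.trans_irrefl u (TransGen.head' (r := fun a b => F.parent a = some b) h2 h)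


end RootedForest

/-- correctness of the recursively defined values `y_{v,c}` from the
W[P]-membership circuit for BinCSP parameterized by feedback vertex set. `W` is a
feedback vertex set, `T` a rooted orientation of the forest `G − W`, `α` a fixed
assignment of `W`, and `Y : (v, c) ↦ Prop` any predicate satisfying the defining
recurrence of `y_{v,c}`. Then for `c ∈ D v`, `Y v c` holds iff there is an assignment `η`
of `{v} ∪ W ∪ desc(v)` with `η v = c`, agreeing with `α` on `W`, respecting the domains,
and respecting every constraint with at least one endpoint in `{v} ∪ desc(v)`. -/
theorem stmt10 {V A : Type} [Fintype V] (G : SimpleGraph V)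
    (D : V → Set A) (C : V → V → Set (A × A))
    (hsym : ∀ u v : V, ∀ a b : A, (a, b) ∈ C u v ↔ (b, a) ∈ C v u)
    (hdom : ∀ u v : V, ∀ a b : A, (a, b) ∈ C u v → a ∈ D u ∧ b ∈ D v)
    (W : Set V) (T : RootedForest {v : V // v ∉ W})
    -- `T` is a rooted orientation of the forest `G − W`
    (hT : ∀ u v : {v : V // v ∉ W},
      G.Adj ↑u ↑v ↔ (T.parent u = some v ∨ T.parent v = some u))
    -- a fixed assignment of the feedback vertex set
    (α : V → A) (hα : ∀ w ∈ W, α w ∈ D w)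
    -- `Y` satisfies the defining recurrence of the values `y_{v,c}`
    (Y : {v : V // v ∉ W} → A → Prop)
    (hY : ∀ (v : {v : V // v ∉ W}) (c : A), c ∈ D ↑v →
      (Y v c ↔
        ((∀ w ∈ W, G.Adj ↑v w → (c, α w) ∈ C ↑v w) ∧
         (∀ v' : {v : V // v ∉ W}, T.parent v' = some v →
            ∃ c' ∈ D ↑v', (c, c') ∈ C ↑v ↑v' ∧ Y v' c')))) :
    ∀ (v : {v : V // v ∉ W}) (c : A), c ∈ D ↑v →
      (Y v c ↔
        ∃ η : V → A,
          η ↑v = c ∧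
          (∀ w ∈ W, η w = α w) ∧
          -- `η` respects the domains on `{v} ∪ desc(v) ∪ W`
          (∀ u : {v : V // v ∉ W}, T.anc v u → η ↑u ∈ D ↑u) ∧
          (∀ w ∈ W, η w ∈ D w) ∧
          -- `η` respects the constraints on edges inside `{v} ∪ desc(v)`
          (∀ x y : {v : V // v ∉ W}, T.anc v x → T.anc v y →
            G.Adj ↑x ↑y → (η ↑x, η ↑y) ∈ C ↑x ↑y) ∧
          -- `η` respects the constraints on edges between `{v} ∪ desc(v)` and `W`
          (∀ x : {v : V // v ∉ W}, T.anc v x →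
            ∀ w ∈ W, G.Adj ↑x w → (η ↑x, η w) ∈ C ↑x w)) := by
  classical
  intro v
  refine T.wf_child.induction
    (C := fun v => ∀ c ∈ D ↑v,
      (Y v c ↔
        ∃ η : V → A,
          η ↑v = c ∧
          (∀ w ∈ W, η w = α w) ∧
          (∀ u : {v : V // v ∉ W}, T.anc v u → η ↑u ∈ D ↑u) ∧
          (∀ w ∈ W, η w ∈ D w) ∧
          (∀ x y : {v : V // v ∉ W}, T.anc v x → T.anc v y →
            G.Adj ↑x ↑y → (η ↑x, η ↑y) ∈ C ↑x ↑y) ∧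
          (∀ x : {v : V // v ∉ W}, T.anc v x →
            ∀ w ∈ W, G.Adj ↑x w → (η ↑x, η w) ∈ C ↑x w))) v ?_
  clear v
  intro v IH c hc
  constructor
  · -- forward direction
    intro hYv
    obtain ⟨hA, hB⟩ := (hY v c hc).mp hYv
    have Hch : ∀ v' : {v : V // v ∉ W}, T.parent v' = some v →
        ∃ η : V → A,
          (c, η ↑v') ∈ C ↑v ↑v' ∧
          (∀ w ∈ W, η w = α w) ∧
          (∀ u : {v : V // v ∉ W}, T.anc v' u → η ↑u ∈ D ↑u) ∧
          (∀ x y : {v : V // v ∉ W}, T.anc v' x → T.anc v' y →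
            G.Adj ↑x ↑y → (η ↑x, η ↑y) ∈ C ↑x ↑y) ∧
          (∀ x : {v : V // v ∉ W}, T.anc v' x →
            ∀ w ∈ W, G.Adj ↑x w → (η ↑x, η w) ∈ C ↑x w) := by
      intro v' hp
      obtain ⟨c', hc', hcc', hY'⟩ := hB v' hp
      obtain ⟨η, e1, e2, e3, e4, e5, e6⟩ := (IH v' hp c' hc').mp hY'
      exact ⟨η, e1 ▸ hcc', e2, e3, e5, e6⟩
    choose ηf hf1 hf2 hf3 hf4 hf5 using Hch
    let η : V → A := fun u =>
      if hu : u ∈ W then α u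
      else if (⟨u, hu⟩ : {x : V // x ∉ W}) = v then c
      else if h : ∃ v', T.parent v' = some v ∧ T.anc v' ⟨u, hu⟩ then ηf h.choose h.choose_spec.1 u
      else α u
    have ηW : ∀ w ∈ W, η w = α w := fun w hw => dif_pos hw
    have ηx : ∀ x : {x : V // x ∉ W}, η ↑x =
        if x = v then c
        else if h : ∃ v', T.parent v' = some v ∧ T.anc v' x then ηf h.choose h.choose_spec.1 ↑x
        else α ↑x := fun x => dif_neg x.2
    have ηv : η ↑v = c := by rw [ηx]; simp
    have ηdesc : ∀ (v' : {x : V // x ∉ W}) (hp : T.parent v' = some v),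
        ∀ u : {x : V // x ∉ W}, T.anc v' u → η ↑u = ηf v' hp ↑u := by
      intro v' hp u hanc
      have hne : u ≠ v := by
        rintro rfl; exact T.not_parent_of_anc hanc hp
      have hex : ∃ v'', T.parent v'' = some v ∧ T.anc v'' u := ⟨v', hp, hanc⟩
      have he : hex.choose = v' :=
        T.child_unique hex.choose_spec.1 hp hex.choose_spec.2 hanc
      subst he
      rw [ηx, if_neg hne, dif_pos hex]
    refine ⟨η, ηv, ηW, ?_, ?_, ?_, ?_⟩
    · -- domains on descendants
      intro u hu
      by_cases hne : u = v
      · subst hne; rw [ηv]; exact hc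
      · obtain ⟨vx, hpx, ax⟩ := T.child_exists hu hne
        rw [ηdesc vx hpx u ax]
        exact hf3 vx hpx u ax
    · -- domains on W
      intro w hw; rw [ηW w hw]; exact hα w hw
    · -- constraints inside
      intro x y hx hy hadj
      by_cases hxv : x = v <;> by_cases hyv : y = v
      · subst hxv; subst hyv; exact absurd hadj (G.irrefl)
      · subst hxv
        rcases (hT x y).mp hadj with hp | hp
        · exact absurd hp (fun hp => T.not_parent_of_anc hy hp)
        · rw [ηv, ηdesc y hp y (T.anc_refl y)]
          exact hf1 y hp
      · subst hyv
        rcases (hT x y).mp hadj with hp | hp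
        · rw [ηdesc x hp x (T.anc_refl x), ηv]
          exact (hsym _ _ _ _).mpr (hf1 x hp)
        · exact absurd hp (fun hp => T.not_parent_of_anc hx hp)
      · obtain ⟨vx, hpx, ax⟩ := T.child_exists hx hxv
        obtain ⟨vy, hpy, ay⟩ := T.child_exists hy hyv
        rcases (hT x y).mp hadj with hp | hp
        · have haxy : T.anc vy x := ReflTransGen.head hp ay
          have he : vx = vy := T.child_unique hpx hpy ax haxy
          subst he
          rw [ηdesc vx hpx x ax, ηdesc vx hpx y ay]
          exact hf4 vx hpx x y ax ay hadj
        · have haxy : T.anc vx y := ReflTransGen.head hp ax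
          have he : vy = vx := T.child_unique hpy hpx ay haxy
          subst he
          rw [ηdesc vy hpy x ax, ηdesc vy hpy y ay]
          exact hf4 vy hpy x y ax ay hadj
    · -- constraints to W
      intro x hx w hw hadj
      by_cases hxv : x = v
      · subst hxv; rw [ηv, ηW w hw]; exact hA w hw hadj
      · obtain ⟨vx, hpx, ax⟩ := T.child_exists hx hxv
        rw [ηdesc vx hpx x ax, ηW w hw]
        have h6 := hf5 vx hpx x ax w hw hadj
        rwa [hf2 vx hpx w hw] at h6
  · -- backward direction
    rintro ⟨η, e1, e2, e3, e4, e5, e6⟩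
    rw [hY v c hc]
    constructor
    · intro w hw hadj
      have h := e6 v (T.anc_refl v) w hw hadj
      rwa [e1, e2 w hw] at h
    · intro v' hp
      have hadj : G.Adj ↑v ↑v' := (hT v v').mpr (Or.inr hp)
      have hanc : T.anc v v' := T.anc_parent hp
      refine ⟨η ↑v', e3 v' hanc, ?_, ?_⟩
      · have h := e5 v v' (T.anc_refl v) hanc hadj
        rwa [e1] at h
      · refine (IH v' hp (η ↑v') (e3 v' hanc)).mpr ?_
        exact ⟨η, rfl, e2, fun u hu => e3 u (T.anc_trans hanc hu), e4,
          fun x y hx hy => e5 x y (T.anc_trans hanc hx) (T.anc_trans hanc hy),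
          fun x hx => e6 x (T.anc_trans hanc hx)⟩
end

section
/- Let k ≥ 2 and let I be a BinCSP instance with Gaifman graph G whose domains are pairwise disjoint, and let T be an elimination forest of G of depth k in which every leaf is at depth exactly k. Define a relational structure 𝔸 over the signature {parent(·,·), forbidden(·,·), domain(·,·), root(·), forest(·)} with universe V(G) ∪ ⋃_{u∈V(G)} D(u), where: forest selects V(G); parent is the parent/child relation of T; root selects the roots of T together with all elements of ⋃_u D(u); domain = {(u, a) : u ∈ V(G), a ∈ D(u)}; and forbidden = ⋃_{uv∈E(G)} (D(u) × D(v)) ∖ C(u,v). Let φ be the first-order sentence ∀x₁∃y₁ … ∀x_k∃y_k [ (root(x₁) ∧ parent(x₁,x₂) ∧ … ∧ parent(x_{k−1},x_k)) → ψ ], where ψ = forest(x₁) ∧ ⋀_{i=1}^k domain(x_i, y_i) ∧ ⋀_{1≤i<j≤k} ¬forbidden(y_i, y_j). Then 𝔸 ⊨ φ if and only if I is satisfiable. -/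
namespace RootedForest

/-- The depth of a vertex: the number of vertices on the path from its root to it. -/
noncomputable def depth {V : Type} (F : RootedForest V) : V → ℕ :=
  F.wf.fix (fun v ih =>
    match h : F.parent v with
    | none => 1
    | some p => ih p h + 1)

/-- A leaf is a vertex with no children. -/
def IsLeaf {V : Type} (F : RootedForest V) (v : V) : Prop := ∀ u, F.parent u ≠ some v

end RootedForest

/-- `AltSatAux P j xs ys` expresses `∀ x₁ ∃ y₁ … ∀ x_j ∃ y_j, P (xs' ++ [x₁, …, x_j])
(ys' ++ [y₁, …, y_j])` where `xs'`, `ys'` are the reversals of the accumulators. -/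
def AltSatAux {U : Type} (P : List U → List U → Prop) : ℕ → List U → List U → Prop
  | 0, xs, ys => P xs.reverse ys.reverse
  | j + 1, xs, ys => ∀ x : U, ∃ y : U, AltSatAux P j (x :: xs) (y :: ys)

/-- Satisfaction of the prenex sentence `∀ x₁ ∃ y₁ … ∀ x_k ∃ y_k, P [x₁, …, x_k]
[y₁, …, y_k]`. -/
def AltSat {U : Type} (k : ℕ) (P : List U → List U → Prop) : Prop := AltSatAux P k [] []

/-- The universe of the structure `𝔸`: the vertices of `G` together with all domain
values (the domains being pairwise disjoint). -/
def Uni (V A : Type) (D : V → Set A) : Type := V ⊕ {a : A // ∃ u, a ∈ D u}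

lemma altSat_of_strategy {U : Type} (k : ℕ) (P : List U → List U → Prop) (f : U → U)
    (key : ∀ l : List U, l.length = k → P l (l.map f)) : AltSat k P := by
  suffices H : ∀ (j : ℕ) (xs : List U), xs.length + j = k → AltSatAux P j xs (xs.map f) by
    simpa [AltSat] using H k [] (by simp)
  intro j
  induction j with
  | zero =>
    intro xs hlen
    show P xs.reverse (xs.map f).reverse
    rw [← List.map_reverse]
    exact key _ (by simpa using hlen)
  | succ j ih =>
    intro xs hlen x
    exact ⟨f x, ih (x :: xs) (by simp at hlen ⊢; omega)⟩

/-- A Skolem-function extraction for `AltSatAux`. -/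
noncomputable def build {U : Type} (k : ℕ) (P : List U → List U → Prop) (h : AltSat k P) :
    (xs : List U) →
    {ys : List U // ys.length = xs.length ∧ (xs.length ≤ k → AltSatAux P (k - xs.length) xs ys)}
  | [] => ⟨[], rfl, fun _ => by simpa [AltSatAux, AltSat] using h⟩
  | x :: xs =>
    let prev := build k P h xs
    if hle : xs.length + 1 ≤ k then
      have h1 : xs.length ≤ k := Nat.le_of_succ_le hle
      have h3 : AltSatAux P ((k - (xs.length + 1)) + 1) xs prev.1 := by
        have h2 : k - xs.length = (k - (xs.length + 1)) + 1 := by omega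
        rw [← h2]
        exact prev.2.2 h1
      ⟨Classical.choose (h3 x) :: prev.1,
        by simp [prev.2.1],
        fun _ => by
          simpa [List.length_cons] using Classical.choose_spec (h3 x)⟩
    else
      ⟨x :: prev.1, by simp [prev.2.1],
        fun hc => absurd (by simpa using hc) hle⟩

lemma altSatAux_cast {U : Type} {P : List U → List U → Prop} {n m : ℕ} (h : n = m)
    {xs ys : List U} (H : AltSatAux P n xs ys) : AltSatAux P m xs ys := h ▸ H

lemma build_tail {U : Type} (k : ℕ) (P : List U → List U → Prop) (h : AltSat k P)
    (x : U) (xs : List U) :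
    ((build k P h (x :: xs)).1).tail = (build k P h xs).1 := by
  rw [build]
  split <;> rfl

lemma build_drop {U : Type} (k : ℕ) (P : List U → List U → Prop) (h : AltSat k P) :
    ∀ (l : List U) (n : ℕ), ((build k P h l).1).drop n = (build k P h (l.drop n)).1
  | l, 0 => by simp; rfl
  | [], n+1 => by
    have h0 : (build k P h ([] : List U)).1 = [] := rfl
    exact h0
  | x :: l, n+1 => by
    calc List.drop (n+1) (build k P h (x :: l)).1
        = List.drop n ((build k P h (x :: l)).1.drop 1) := by
          rw [List.drop_drop, Nat.add_comm]
      _ = List.drop n ((build k P h l).1) := by rw [List.drop_one, build_tail]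
      _ = (build k P h (((x :: l).drop (n+1)))).1 := build_drop k P h l n



namespace RootedForest

variable {V : Type} (F : RootedForest V)

/-- The reversed root-to-vertex path: `[v, parent v, …, root]`. -/
noncomputable def rchain : V → List V :=
  F.wf.fix (fun v ih =>
    match h : F.parent v with
    | none => [v]
    | some p => v :: ih p h)

lemma depth_eq (v : V) : F.depth v = match F.parent v with
    | none => 1
    | some p => F.depth p + 1 := by
  rw [depth, WellFounded.fix_eq]
  rcases h : F.parent v with _ | p <;> simp [h, depth]

lemma rchain_eq (v : V) : F.rchain v = match F.parent v with
    | none => [v]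
    | some p => v :: F.rchain p := by
  rw [rchain, WellFounded.fix_eq]
  rcases h : F.parent v with _ | p <;> simp [h, rchain]

lemma rchain_none {v : V} (h : F.parent v = none) : F.rchain v = [v] := by
  rw [rchain_eq, h]

lemma rchain_some {v p : V} (h : F.parent v = some p) : F.rchain v = v :: F.rchain p := by
  rw [rchain_eq, h]

lemma rchain_length (v : V) : (F.rchain v).length = F.depth v := by
  induction v using F.wf.induction with
  | _ v ih =>
    rw [rchain_eq, depth_eq]
    rcases h : F.parent v with _ | p
    · simp
    · simpa using ih p h

lemma rchain_cons (v : V) : ∃ t, F.rchain v = v :: t := by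
  rw [rchain_eq]; rcases F.parent v with _ | p <;> exact ⟨_, rfl⟩

lemma anc_suffix {u v : V} (h : F.anc u v) : F.rchain u <:+ F.rchain v := by
  induction h with
  | refl => exact List.suffix_refl _
  | tail _ hr ih =>
    refine List.IsSuffix.trans ?_ ih
    rw [F.rchain_some hr]
    exact ⟨[_], rfl⟩

lemma depth_pos (v : V) : 1 ≤ F.depth v := by
  rw [depth_eq]; rcases F.parent v with _ | p <;> simp

lemma rchain_parent {v : V} : ∀ (j : ℕ) (a b : V), (F.rchain v)[j]? = some a →
    (F.rchain v)[j+1]? = some b → F.parent a = some b := by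
  induction v using F.wf.induction with
  | _ v ih =>
    intro j a b ha hb
    rcases h : F.parent v with _ | p
    · rw [F.rchain_none h] at ha hb
      match j with
      | 0 => simp at hb
      | j+1 => simp at hb
    · rw [F.rchain_some h] at ha hb
      match j with
      | 0 =>
        simp at ha
        obtain ⟨t, ht⟩ := F.rchain_cons p
        rw [ht] at hb; simp at hb
        rw [← ha, h, hb]
      | j+1 =>
        simp only [List.getElem?_cons_succ] at ha hb
        exact ih p h j a b ha hb

lemma rchain_getLast {v : V} : ∀ a : V, (F.rchain v).getLast? = some a → F.parent a = none := by
  induction v using F.wf.induction with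
  | _ v ih =>
    intro a ha
    rcases h : F.parent v with _ | p
    · rw [F.rchain_none h] at ha
      simp at ha; rw [← ha, h]
    · rw [F.rchain_some h] at ha
      obtain ⟨t, ht⟩ := F.rchain_cons p
      rw [ht] at ha
      simp only [List.getLast?_cons_cons] at ha
      rw [← ht] at ha
      exact ih p h a ha

lemma exists_extension (k : ℕ)
    (hdepth : ∀ v : V, F.depth v ≤ k)
    (hleaf : ∀ v : V, F.IsLeaf v → F.depth v = k) (v : V) :
    ∃ w : V, F.rchain v <:+ F.rchain w ∧ F.depth w = k := by
  obtain ⟨n, hn⟩ : ∃ n, k - F.depth v ≤ n := ⟨k, Nat.sub_le _ _⟩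
  induction n generalizing v with
  | zero =>
    refine ⟨v, List.suffix_refl _, ?_⟩
    have := hdepth v
    omega
  | succ n IH =>
    by_cases hv : F.depth v = k
    · exact ⟨v, List.suffix_refl _, hv⟩
    · have : ¬ F.IsLeaf v := fun h => hv (hleaf v h)
      simp only [IsLeaf, not_forall, not_not] at this
      obtain ⟨u, hu⟩ := this
      have hdu : F.depth u = F.depth v + 1 := by rw [depth_eq, hu]
      obtain ⟨w, hw1, hw2⟩ := IH u (by omega)
      refine ⟨w, ?_, hw2⟩
      refine List.IsSuffix.trans ?_ hw1
      rw [F.rchain_some hu]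
      exact ⟨[u], rfl⟩

lemma head_rchain_eq {u v : V} (h : F.rchain u <:+ F.rchain v) (he : F.depth u = F.depth v) :
    u = v := by
  have hlen : (F.rchain u).length = (F.rchain v).length := by
    rw [rchain_length, rchain_length, he]
  have heq := h.eq_of_length hlen
  obtain ⟨t, ht⟩ := F.rchain_cons u
  obtain ⟨s, hs⟩ := F.rchain_cons v
  rw [ht, hs] at heq
  exact (List.cons.injEq _ _ _ _ ▸ heq).1

lemma drop_rchain {u v : V} (h : F.rchain u <:+ F.rchain v) :
    (F.rchain v).drop (F.depth v - F.depth u) = F.rchain u := by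
  obtain ⟨t, ht⟩ := h
  have hlen : t.length = F.depth v - F.depth u := by
    have := congrArg List.length ht
    simp [rchain_length] at this
    omega
  rw [← hlen, ← ht, List.drop_left]

lemma depth_mono {u v : V} (h : F.anc u v) (hne : u ≠ v) : F.depth u < F.depth v := by
  have hs := F.anc_suffix h
  have hl : (F.rchain u).length ≤ (F.rchain v).length := hs.length_le
  rw [rchain_length, rchain_length] at hl
  rcases lt_or_eq_of_le hl with h' | h'
  · exact h'
  · exact absurd (F.head_rchain_eq hs h') hne

end RootedForest

/-- correctness of the reduction from BinCSP parameterized by treedepth to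
model-checking `∀`-guided first-order sentences. `T` is an elimination forest of `G` of
depth `k ≥ 2` all of whose leaves are at depth exactly `k`, and the domains are pairwise
disjoint. The sentence `φ = ∀x₁∃y₁…∀x_k∃y_k ((root(x₁) ∧ ⋀ parent(x_i,x_{i+1})) → ψ)`
with `ψ = forest(x₁) ∧ ⋀ domain(x_i,y_i) ∧ ⋀_{i<j} ¬forbidden(y_i,y_j)` holds in the
structure `𝔸` described in the paper iff the instance is satisfiable. -/
theorem stmt12 {V A : Type} [Fintype V] (G : SimpleGraph V)
    (D : V → Set A) (C : V → V → Set (A × A))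
    (hsym : ∀ u v : V, ∀ a b : A, (a, b) ∈ C u v ↔ (b, a) ∈ C v u)
    (hdom : ∀ u v : V, ∀ a b : A, (a, b) ∈ C u v → a ∈ D u ∧ b ∈ D v)
    (hdisj : ∀ u v : V, u ≠ v → Disjoint (D u) (D v))
    (k : ℕ) (hk : 2 ≤ k)
    (T : RootedForest V)
    (hElim : ∀ u v : V, G.Adj u v → T.anc u v ∨ T.anc v u)
    (hdepth : ∀ v : V, T.depth v ≤ k)
    (hleaf : ∀ v : V, T.IsLeaf v → T.depth v = k) :
    AltSat (U := Uni V A D) k (fun xs ys =>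
      -- the guard `root(x₁) ∧ parent(x₁,x₂) ∧ … ∧ parent(x_{k-1},x_k)`, where `root`
      -- selects the roots of `T` and all domain values, and `parent(x, x')` says that
      -- `x'` is a child of `x` in `T`
      ((∀ x : Uni V A D, xs[0]? = some x →
          ((∃ s : V, x = Sum.inl s ∧ T.parent s = none) ∨ x.isRight)) ∧
       (∀ (i : ℕ) (x x' : Uni V A D), xs[i]? = some x → xs[(i+1)]? = some x' →
          ∃ s t : V, x = Sum.inl s ∧ x' = Sum.inl t ∧ T.parent t = some s)) →
      -- the matrix `ψ = forest(x₁) ∧ ⋀_i domain(x_i, y_i) ∧ ⋀_{i<j} ¬forbidden(y_i,y_j)`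
      ((∀ x : Uni V A D, xs[0]? = some x → x.isLeft) ∧
       (∀ (i : ℕ) (x y : Uni V A D), xs[i]? = some x → ys[i]? = some y →
          ∃ (u : V) (a : {a : A // ∃ w, a ∈ D w}),
            x = Sum.inl u ∧ y = Sum.inr a ∧ (a : A) ∈ D u) ∧
       (∀ (i j : ℕ) (yi yj : Uni V A D), i < j →
          ys[i]? = some yi → ys[j]? = some yj →
          ¬ ∃ (u v : V) (a b : {a : A // ∃ w, a ∈ D w}),
              yi = Sum.inr a ∧ yj = Sum.inr b ∧
              G.Adj u v ∧ (a : A) ∈ D u ∧ (b : A) ∈ D v ∧ ((a : A), (b : A)) ∉ C u v)))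
    ↔ (∃ η : V → A, (∀ v, η v ∈ D v) ∧ ∀ u v, G.Adj u v → (η u, η v) ∈ C u v) := by
  constructor
  · intro hA
    -- `core`: for every vertex `w` of depth `k`, playing the root-to-`w` path against the
    -- Skolem functions yields responses satisfying the matrix, and the response at the
    -- position of any vertex `v` on the path depends only on `v`.
    have hcore : ∀ w : V, T.depth w = k →
        ∃ ys : List (Uni V A D),
          (∀ v : V, T.rchain v <:+ T.rchain w →
            ∃ a : {a : A // ∃ u, a ∈ D u},
              ys[T.depth v - 1]? = some (Sum.inr a) ∧
              ((build k _ hA ((T.rchain v).map (Sum.inl : V → Uni V A D))).1).head? =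
                some (Sum.inr a) ∧
              (a : A) ∈ D v) ∧
          (∀ (i j : ℕ) (yi yj : Uni V A D), i < j →
            ys[i]? = some yi → ys[j]? = some yj →
            ¬ ∃ (u v : V) (a b : {a : A // ∃ w, a ∈ D w}),
                yi = Sum.inr a ∧ yj = Sum.inr b ∧
                G.Adj u v ∧ (a : A) ∈ D u ∧ (b : A) ∈ D v ∧ ((a : A), (b : A)) ∉ C u v) := by
      intro w hw
      have hL : (T.rchain w).length = k := by rw [T.rchain_length, hw]
      have hacc : ((T.rchain w).map (Sum.inl : V → Uni V A D)).length = k := by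
        simp [hL]
      have hys0 : ((build k _ hA ((T.rchain w).map (Sum.inl : V → Uni V A D))).1).length = k := by
        rw [(build k _ hA ((T.rchain w).map (Sum.inl : V → Uni V A D))).2.1]; exact hacc
      have hsat0 := (build k _ hA ((T.rchain w).map (Sum.inl : V → Uni V A D))).2.2
        (le_of_eq hacc)
      have esub : k - ((T.rchain w).map (Sum.inl : V → Uni V A D)).length = 0 := by
        rw [hacc]; omega
      replace hsat0 := altSatAux_cast esub hsat0
      simp only [AltSatAux] at hsat0
      -- the guard holds for this path
      have hg1 : ∀ x : Uni V A D,
          (((T.rchain w).map (Sum.inl : V → Uni V A D)).reverse)[0]? = some x →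
          ((∃ s : V, x = Sum.inl s ∧ T.parent s = none) ∨ x.isRight) := by
        intro x hx
        erw [List.getElem?_reverse (l := (T.rchain w).map (Sum.inl : V → Uni V A D)) (i := 0)
          (by rw [hacc]; omega), hacc, List.getElem?_map] at hx
        obtain ⟨r, hr, hxr⟩ := Option.map_eq_some_iff.mp hx
        have hlast : (T.rchain w).getLast? = some r := by
          rw [List.getLast?_eq_getElem?, hL]
          simpa using hr
        exact Or.inl ⟨r, hxr.symm, T.rchain_getLast r hlast⟩
      have hg2 : ∀ (i : ℕ) (x x' : Uni V A D),
          (((T.rchain w).map (Sum.inl : V → Uni V A D)).reverse)[i]? = some x →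
          (((T.rchain w).map (Sum.inl : V → Uni V A D)).reverse)[i+1]? = some x' →
          ∃ s t : V, x = Sum.inl s ∧ x' = Sum.inl t ∧ T.parent t = some s := by
        intro i x x' hx hx'
        have hikk : i + 1 < k := by
          rcases List.getElem?_eq_some_iff.mp hx' with ⟨h1, _⟩
          simpa [hacc] using h1
        erw [List.getElem?_reverse (l := (T.rchain w).map (Sum.inl : V → Uni V A D)) (i := i)
          (by rw [hacc]; omega), hacc, List.getElem?_map] at hx
        erw [List.getElem?_reverse (l := (T.rchain w).map (Sum.inl : V → Uni V A D)) (i := i+1)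
          (by rw [hacc]; omega), hacc, List.getElem?_map] at hx'
        obtain ⟨a, ha, hxa⟩ := Option.map_eq_some_iff.mp hx
        obtain ⟨b, hb, hxb⟩ := Option.map_eq_some_iff.mp hx'
        have e1 : k - 1 - i = (k - 1 - (i + 1)) + 1 := by omega
        rw [e1] at ha
        exact ⟨a, b, hxa.symm, hxb.symm, T.rchain_parent (k - 1 - (i+1)) b a hb ha⟩
      obtain ⟨M1, M2, M3⟩ := hsat0 ⟨hg1, hg2⟩
      -- position of a vertex `v` lying on the path
      have hidx : ∀ v : V, T.rchain v <:+ T.rchain w →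
          ((((T.rchain w).map (Sum.inl : V → Uni V A D)).reverse)[T.depth v - 1]? =
              some (Sum.inl v)) ∧
          ((((build k _ hA ((T.rchain w).map (Sum.inl : V → Uni V A D))).1).reverse)[T.depth v - 1]? =
              ((build k _ hA ((T.rchain v).map (Sum.inl : V → Uni V A D))).1).head?) := by
        intro v hsuf
        have hdvk : T.depth v ≤ k := by
          have h' := hsuf.length_le
          rw [T.rchain_length, T.rchain_length, hw] at h'
          exact h'
        have hdv1 : 1 ≤ T.depth v := T.depth_pos v
        have hdrop : (T.rchain w).drop (k - T.depth v) = T.rchain v := by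
          have h' := T.drop_rchain hsuf
          rwa [hw] at h'
        constructor
        · rw [List.getElem?_reverse (l := (T.rchain w).map (Sum.inl : V → Uni V A D))
            (i := T.depth v - 1) (by rw [hacc]; omega), hacc]
          have e : k - 1 - (T.depth v - 1) = k - T.depth v := by omega
          rw [e, ← List.head?_drop, ← List.map_drop, hdrop]
          obtain ⟨t, ht⟩ := T.rchain_cons v
          rw [ht]
          rfl
        · rw [List.getElem?_reverse
            (i := T.depth v - 1) (by rw [hys0]; omega), hys0]
          have e : k - 1 - (T.depth v - 1) = k - T.depth v := by omega
          rw [e, ← List.head?_drop, build_drop]; erw [← List.map_drop, hdrop]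
      refine ⟨(((build k _ hA ((T.rchain w).map (Sum.inl : V → Uni V A D))).1).reverse), ?_, M3⟩
      intro v hsuf
      obtain ⟨hxidx, hyidx⟩ := hidx v hsuf
      have hne : ((build k _ hA ((T.rchain v).map (Sum.inl : V → Uni V A D))).1) ≠ [] := by
        have hlen : ((build k _ hA ((T.rchain v).map (Sum.inl : V → Uni V A D))).1).length =
            T.depth v := by
          rw [(build k _ hA ((T.rchain v).map (Sum.inl : V → Uni V A D))).2.1]
          erw [List.length_map, T.rchain_length]
        intro hnil
        rw [hnil] at hlen
        have := T.depth_pos v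
        simp at hlen
        omega
      obtain ⟨y, hy⟩ : ∃ y, ((build k _ hA ((T.rchain v).map (Sum.inl : V → Uni V A D))).1).head? =
          some y := ⟨_, List.head?_eq_head hne⟩
      obtain ⟨u, a, h1, h2, h3⟩ := M2 (T.depth v - 1) (Sum.inl v) y hxidx (hyidx.trans hy)
      obtain rfl : v = u := Sum.inl.inj h1
      refine ⟨a, ?_, ?_, h3⟩
      · rw [hyidx, hy, h2]; rfl
      · rw [hy, h2]; rfl
    -- the assignment
    have HY : ∀ v : V, ∃ a : {a : A // ∃ u, a ∈ D u},
        ((build k _ hA ((T.rchain v).map (Sum.inl : V → Uni V A D))).1).head? =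
          some (Sum.inr a) ∧ (a : A) ∈ D v := by
      intro v
      obtain ⟨w, hsuf, hw⟩ := T.exists_extension k hdepth hleaf v
      obtain ⟨ys, hprop, _⟩ := hcore w hw
      obtain ⟨a, _, h2, h3⟩ := hprop v hsuf
      exact ⟨a, h2, h3⟩
    have main : ∀ u v : V, G.Adj u v → T.anc u v →
        (((HY u).choose : A), ((HY v).choose : A)) ∈ C u v := by
      intro u v hadj hanc
      have hne : u ≠ v := G.ne_of_adj hadj
      obtain ⟨w, hsufv, hw⟩ := T.exists_extension k hdepth hleaf v
      have hsufu : T.rchain u <:+ T.rchain w := (T.anc_suffix hanc).trans hsufv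
      obtain ⟨ys, hprop, hforb⟩ := hcore w hw
      obtain ⟨au, hau1, hau2, hau3⟩ := hprop u hsufu
      obtain ⟨av, hav1, hav2, hav3⟩ := hprop v hsufv
      have hu : au = (HY u).choose :=
        Sum.inr.inj (Option.some_injective _ (hau2.symm.trans (HY u).choose_spec.1))
      have hv : av = (HY v).choose :=
        Sum.inr.inj (Option.some_injective _ (hav2.symm.trans (HY v).choose_spec.1))
      have hlt : T.depth u - 1 < T.depth v - 1 := by
        have h1 := T.depth_mono hanc hne
        have h2 := T.depth_pos u
        omega
      by_contra hnc
      exact hforb _ _ _ _ hlt hau1 hav1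
        ⟨u, v, au, av, rfl, rfl, hadj, hau3, hav3, by rw [hu, hv]; exact hnc⟩
    refine ⟨fun v => ((HY v).choose : A), fun v => (HY v).choose_spec.2, ?_⟩
    intro u v hadj
    rcases hElim u v hadj with h | h
    · exact main u v hadj h
    · exact (hsym u v _ _).mpr (main v u hadj.symm h)
  · rintro ⟨η, hD, hC⟩
    apply altSat_of_strategy k _
      (fun x => Sum.elim (fun u => (Sum.inr ⟨η u, ⟨u, hD u⟩⟩ : Uni V A D))
        (fun a => Sum.inr a) x)
    intro l hl
    rintro ⟨hg1, hg2⟩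
    have hall : ∀ (i : ℕ) (x : Uni V A D), l[i]? = some x → ∃ s : V, x = Sum.inl s := by
      intro i x hx
      have hi : i < k := by
        rcases List.getElem?_eq_some_iff.mp hx with ⟨h1, _⟩
        omega
      by_cases hik : i + 1 < k
      · obtain ⟨x', hx'⟩ : ∃ x', l[i+1]? = some x' :=
          ⟨_, List.getElem?_eq_getElem (by omega)⟩
        obtain ⟨s, t, hs, _, _⟩ := hg2 i x x' hx hx'
        exact ⟨s, hs⟩
      · have hi1 : 1 ≤ i := by omega
        obtain ⟨j, rfl⟩ : ∃ j, i = j + 1 := ⟨i - 1, by omega⟩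
        obtain ⟨x0, hx0⟩ : ∃ x0, l[j]? = some x0 :=
          ⟨_, List.getElem?_eq_getElem (by omega)⟩
        obtain ⟨s, t, _, ht, _⟩ := hg2 j x0 x hx0 hx
        exact ⟨t, ht⟩
    refine ⟨?_, ?_, ?_⟩
    · intro x hx
      obtain ⟨s, rfl⟩ := hall 0 x hx
      rfl
    · intro i x y hx hy
      erw [List.getElem?_map] at hy
      obtain ⟨x0, hx0, hfx⟩ := Option.map_eq_some_iff.mp hy
      obtain rfl : x0 = x := Option.some_injective _ (hx0.symm.trans hx)
      obtain ⟨s, rfl⟩ := hall i x0 hx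
      exact ⟨s, ⟨η s, ⟨s, hD s⟩⟩, rfl, hfx.symm, hD s⟩
    · intro i j yi yj hij hyi hyj
      rintro ⟨u', v', a, b, ha, hb, hadj, haD, hbD, hnC⟩
      erw [List.getElem?_map] at hyi hyj
      obtain ⟨xi, hxi, hfi⟩ := Option.map_eq_some_iff.mp hyi
      obtain ⟨xj, hxj, hfj⟩ := Option.map_eq_some_iff.mp hyj
      obtain ⟨ui, rfl⟩ := hall i xi hxi
      obtain ⟨uj, rfl⟩ := hall j xj hxj
      rw [ha] at hfi
      rw [hb] at hfj
      obtain rfl := Sum.inr.inj hfi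
      obtain rfl := Sum.inr.inj hfj
      have hui : u' = ui := by
        by_contra hne
        exact Set.disjoint_left.mp (hdisj u' ui hne) haD (hD ui)
      have huj : v' = uj := by
        by_contra hne
        exact Set.disjoint_left.mp (hdisj v' uj hne) hbD (hD uj)
      subst hui huj
      exact hnC (hC u' v' hadj)
end

section
/- Let (G, L) be a List Coloring instance with all lists contained in a finite color set 𝒞. Let G′ be the graph obtained from G by adding, for each vertex v of G and each color c ∈ 𝒞 ∖ L(v), a new vertex a_{v,c} adjacent only to v, and let f be the precoloring assigning color c to each a_{v,c}. Then f extends to a proper coloring of G′ with colors from 𝒞 if and only if (G, L) is a yes-instance. Moreover, for every W ⊆ V(G) and every d ≥ 1, if G − W has an elimination forest of depth at most d − 1, then G′ − W has an elimination forest of depth at most d. -/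
namespace RootedForest

lemma depth_none {V : Type} (F : RootedForest V) {v : V} (h : F.parent v = none) :
    F.depth v = 1 := by
  unfold depth
  rw [WellFounded.fix_eq]
  split <;> simp_all

lemma depth_some {V : Type} (F : RootedForest V) {v p : V} (h : F.parent v = some p) :
    F.depth v = F.depth p + 1 := by
  unfold depth
  rw [WellFounded.fix_eq]
  split
  · simp_all
  · rename_i q heq
    rw [h] at heq
    cases heq
    rfl

end RootedForest

section Ext

attribute [local instance] Classical.propDecidable

def extMap {V : Type} (W : Set V) (A : Type) (v : {v : V // v ∉ W}) :
    {x : V ⊕ A // x ∉ Sum.inl '' W} :=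
  ⟨Sum.inl v.1, fun h => v.2 (Sum.inl_injective.mem_set_image.mp h)⟩

noncomputable def extParent {V A : Type} (W : Set V) (base : A → V) (F : RootedForest {v : V // v ∉ W}) :
    {x : V ⊕ A // x ∉ Sum.inl '' W} → Option {x : V ⊕ A // x ∉ Sum.inl '' W}
  | ⟨Sum.inl v, hv⟩ =>
      Option.map (extMap W A) (F.parent ⟨v, fun h => hv (Set.mem_image_of_mem _ h)⟩)
  | ⟨Sum.inr a, _⟩ => if h : base a ∈ W then none else some (extMap W A ⟨base a, h⟩)

noncomputable def extM {V A : Type} (W : Set V) (base : A → V) (F : RootedForest {v : V // v ∉ W}) :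
    {x : V ⊕ A // x ∉ Sum.inl '' W} → ℕ
  | ⟨Sum.inl v, hv⟩ => F.depth ⟨v, fun h => hv (Set.mem_image_of_mem _ h)⟩
  | ⟨Sum.inr a, _⟩ => if h : base a ∈ W then 0 else F.depth ⟨base a, h⟩ + 1

variable {V A : Type} (W : Set V) (base : A → V) (F : RootedForest {v : V // v ∉ W})

lemma extParent_map (u : {v : V // v ∉ W}) :
    extParent W base F (extMap W A u) = Option.map (extMap W A) (F.parent u) := rfl

lemma extM_map (u : {v : V // v ∉ W}) : extM W base F (extMap W A u) = F.depth u := rfl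

lemma extParent_wf :
    WellFounded (fun a b => extParent W base F b = some a) := by
  classical
  have hsub : Subrelation (fun a b => extParent W base F b = some a)
      (InvImage (· < ·) (extM W base F)) := by
    intro x y hxy
    obtain ⟨v | a, hy⟩ := y
    · cases hp : F.parent ⟨v, fun h => hy (Set.mem_image_of_mem _ h)⟩ with
      | none => simp [extParent, hp] at hxy
      | some p =>
        simp only [extParent, hp, Option.map_some] at hxy
        cases hxy
        have : extM W base F ⟨Sum.inl v, hy⟩ = F.depth p + 1 := by
          simpa [extM] using F.depth_some hp
        simp [InvImage, this, extM_map]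
    · by_cases h : base a ∈ W
      · simp [extParent, h] at hxy
      · simp only [extParent, dif_neg h] at hxy
        cases hxy
        have : extM W base F ⟨Sum.inr a, hy⟩ = F.depth ⟨base a, h⟩ + 1 := by
          simp [extM, h]
        simp [InvImage, this, extM_map]
  exact Subrelation.wf hsub (InvImage.wf _ Nat.lt_wfRel.wf)

noncomputable def extForest : RootedForest {x : V ⊕ A // x ∉ Sum.inl '' W} :=
  ⟨extParent W base F, extParent_wf W base F⟩

lemma extDepth_map (u : {v : V // v ∉ W}) :
    (extForest W base F).depth (extMap W A u) = F.depth u := by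
  refine WellFounded.induction F.wf
    (C := fun u => (extForest W base F).depth (extMap W A u) = F.depth u) u ?_
  intro v ih
  cases hp : F.parent v with
  | none =>
    rw [F.depth_none hp, (extForest W base F).depth_none]
    show extParent W base F (extMap W A v) = none
    rw [extParent_map, hp, Option.map_none]
  | some p =>
    have hps : (extForest W base F).parent (extMap W A v) = some (extMap W A p) := by
      show extParent W base F (extMap W A v) = some (extMap W A p)
      rw [extParent_map, hp, Option.map_some]
    rw [F.depth_some hp, (extForest W base F).depth_some hps, ih p hp]

lemma extAnc (u v : {v : V // v ∉ W}) (h : F.anc u v) :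
    (extForest W base F).anc (extMap W A u) (extMap W A v) :=
  Relation.ReflTransGen.lift (p := fun a b => (extForest W base F).parent a = some b) (extMap W A)
    (fun a b hab => by
      show extParent W base F (extMap W A a) = some (extMap W A b)
      rw [extParent_map, hab, Option.map_some]) _ _ h

end Ext

/-- reduction from List Coloring to Precoloring Extension. `G'` is obtained
from `G` by adding, for every vertex `v` and color `c ∈ 𝒞 ∖ L(v)`, a pendant vertex
`a_{v,c}` adjacent only to `v` and precolored with `c`. Then the precoloring extends to a
proper `𝒞`-coloring of `G'` iff `(G, L)` is a yes-instance of List Coloring; moreover, if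
`G − W` has an elimination forest of depth at most `d − 1`, then `G' − W` has one of depth
at most `d`. -/
theorem stmt15 {V Col : Type} [Finite V] [Finite Col] (G : SimpleGraph V)
    (𝒞 : Finset Col) (L : V → Finset Col) (hL : ∀ v, L v ⊆ 𝒞)
    (G' : SimpleGraph (V ⊕ {p : V × Col // p.2 ∈ 𝒞 ∧ p.2 ∉ L p.1}))
    (hG' : ∀ x y : V ⊕ {p : V × Col // p.2 ∈ 𝒞 ∧ p.2 ∉ L p.1}, G'.Adj x y ↔
      ((∃ u v : V, x = Sum.inl u ∧ y = Sum.inl v ∧ G.Adj u v) ∨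
       (∃ (v : V) (a : {p : V × Col // p.2 ∈ 𝒞 ∧ p.2 ∉ L p.1}), a.1.1 = v ∧
          ((x = Sum.inl v ∧ y = Sum.inr a) ∨ (x = Sum.inr a ∧ y = Sum.inl v))))) :
    -- the precoloring of the pendant vertices extends iff `(G, L)` is a yes-instance
    ((∃ f' : V ⊕ {p : V × Col // p.2 ∈ 𝒞 ∧ p.2 ∉ L p.1} → Col,
        (∀ x, f' x ∈ 𝒞) ∧
        (∀ a : {p : V × Col // p.2 ∈ 𝒞 ∧ p.2 ∉ L p.1}, f' (Sum.inr a) = a.1.2) ∧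
        (∀ x y, G'.Adj x y → f' x ≠ f' y)) ↔
      (∃ g : V → Col, (∀ v, g v ∈ L v) ∧ ∀ u v : V, G.Adj u v → g u ≠ g v)) ∧
    -- and the construction increases the treedepth of `G − W` by at most one
    (∀ (W : Set V) (d : ℕ), 1 ≤ d →
      (∃ F : RootedForest {v : V // v ∉ W},
        (∀ u v : {v : V // v ∉ W}, G.Adj ↑u ↑v → F.anc u v ∨ F.anc v u) ∧
        (∀ v, F.depth v ≤ d - 1)) →
      (∃ F' : RootedForest {x : V ⊕ {p : V × Col // p.2 ∈ 𝒞 ∧ p.2 ∉ L p.1} //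
          x ∉ Sum.inl '' W},
        (∀ u v : {x : V ⊕ {p : V × Col // p.2 ∈ 𝒞 ∧ p.2 ∉ L p.1} // x ∉ Sum.inl '' W},
          G'.Adj ↑u ↑v → F'.anc u v ∨ F'.anc v u) ∧
        (∀ x, F'.depth x ≤ d))) := by
  let A := {p : V × Col // p.2 ∈ 𝒞 ∧ p.2 ∉ L p.1}
  constructor
  · constructor
    · rintro ⟨f', hf𝒞, hfa, hfadj⟩
      refine ⟨fun v => f' (Sum.inl v), fun v => ?_, fun u v huv =>
        hfadj _ _ ((hG' _ _).2 (Or.inl ⟨u, v, rfl, rfl, huv⟩))⟩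
      by_contra hvL
      have hadj : G'.Adj (Sum.inl v)
          (Sum.inr ⟨(v, f' (Sum.inl v)), hf𝒞 _, hvL⟩) :=
        (hG' _ _).2 (Or.inr ⟨v, _, rfl, Or.inl ⟨rfl, rfl⟩⟩)
      exact hfadj _ _ hadj (hfa ⟨(v, f' (Sum.inl v)), hf𝒞 _, hvL⟩).symm
    · rintro ⟨g, hgL, hgadj⟩
      refine ⟨Sum.elim g (fun a => a.1.2), ?_, fun a => rfl, ?_⟩
      · rintro (v | a)
        · exact hL v (hgL v)
        · exact a.2.1
      · intro x y hxy
        rcases (hG' x y).1 hxy with ⟨u, v, rfl, rfl, huv⟩ |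
          ⟨v, a, hav, ⟨rfl, rfl⟩ | ⟨rfl, rfl⟩⟩
        · exact hgadj u v huv
        · simp only [Sum.elim_inl, Sum.elim_inr]
          intro h
          exact a.2.2 (hav ▸ h ▸ hgL v)
        · simp only [Sum.elim_inl, Sum.elim_inr]
          intro h
          exact a.2.2 (hav ▸ h ▸ hgL v)
  · rintro W d hd ⟨F, hcov, hdep⟩
    classical
    refine ⟨extForest W (fun a : A => a.1.1) F, ?_, ?_⟩
    · rintro ⟨x, hx⟩ ⟨y, hy⟩ hadj
      rcases (hG' x y).1 hadj with ⟨u, v, rfl, rfl, huv⟩ |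
        ⟨v, a, hav, ⟨rfl, rfl⟩ | ⟨rfl, rfl⟩⟩
      · have hu : u ∉ W := fun h => hx (Set.mem_image_of_mem _ h)
        have hv : v ∉ W := fun h => hy (Set.mem_image_of_mem _ h)
        have hux : (⟨Sum.inl u, hx⟩ : {x : V ⊕ A // x ∉ Sum.inl '' W}) =
            extMap W A ⟨u, hu⟩ := rfl
        have hvy : (⟨Sum.inl v, hy⟩ : {x : V ⊕ A // x ∉ Sum.inl '' W}) =
            extMap W A ⟨v, hv⟩ := rfl
        rw [hux, hvy]
        rcases hcov ⟨u, hu⟩ ⟨v, hv⟩ huv with h | h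
        · exact Or.inl (extAnc W _ F _ _ h)
        · exact Or.inr (extAnc W _ F _ _ h)
      · -- x = inl v, y = inr a, base a = v ∉ W
        have hv : v ∉ W := fun h => hx (Set.mem_image_of_mem _ h)
        left
        refine Relation.ReflTransGen.single ?_
        show extParent W (fun a : A => a.1.1) F ⟨Sum.inr a, hy⟩ = some ⟨Sum.inl v, hx⟩
        have hbw : a.1.1 ∉ W := hav ▸ hv
        simp only [extParent, dif_neg hbw]
        congr 1
        apply Subtype.ext
        show Sum.inl a.1.1 = Sum.inl v
        rw [hav]
      · have hv : v ∉ W := fun h => hy (Set.mem_image_of_mem _ h)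
        right
        refine Relation.ReflTransGen.single ?_
        show extParent W (fun a : A => a.1.1) F ⟨Sum.inr a, hx⟩ = some ⟨Sum.inl v, hy⟩
        have hbw : a.1.1 ∉ W := hav ▸ hv
        simp only [extParent, dif_neg hbw]
        congr 1
        apply Subtype.ext
        show Sum.inl a.1.1 = Sum.inl v
        rw [hav]
    · rintro ⟨x | a, hx⟩
      · have hv : x ∉ W := fun h => hx (Set.mem_image_of_mem _ h)
        have : (⟨Sum.inl x, hx⟩ : {x : V ⊕ A // x ∉ Sum.inl '' W}) =
            extMap W A ⟨x, hv⟩ := rfl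
        rw [this, extDepth_map]
        exact le_trans (hdep _) (Nat.sub_le d 1)
      · by_cases h : a.1.1 ∈ W
        · have hpn : (extForest W (fun a : A => a.1.1) F).parent ⟨Sum.inr a, hx⟩ = none := by
            show extParent W (fun a : A => a.1.1) F ⟨Sum.inr a, hx⟩ = none
            simp [extParent, h]
          rw [(extForest W (fun a : A => a.1.1) F).depth_none hpn]
          exact hd
        · have hps : (extForest W (fun a : A => a.1.1) F).parent ⟨Sum.inr a, hx⟩ =
              some (extMap W A ⟨a.1.1, h⟩) := by
            show extParent W (fun a : A => a.1.1) F ⟨Sum.inr a, hx⟩ = _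
            simp [extParent, h]
          rw [(extForest W (fun a : A => a.1.1) F).depth_some hps, extDepth_map]
          have := hdep ⟨a.1.1, h⟩
          omega
end
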